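/- Let V₀, V₁ be independent standard normal random variables and δ ∈ (−1,1). Then Y = √(1−δ²)·V₀ + δ·|V₁| has density f(y) = 2·φ(y)·Φ(αy) with α = δ/√(1−δ²). -/

import Mathlib

open Real MeasureTheory ProbabilityTheory

/-- Standard normal density. -/
noncomputable def stdNormalPDF (x : ℝ) : ℝ :=
  (Real.sqrt (2 * Real.pi))⁻¹ * Real.exp (-x ^ 2 / 2)

/-- Standard normal distribution function. -/
noncomputable def stdNormalCDF (x : ℝ) : ℝ :=
  ∫ t in Set.Iic x, stdNormalPDF t

/-!
Write `a = √(1 - δ²)`. Conditionally on `|V₁| = y`, `Y` is `N(δy, a²)`, and `|V₁|` has density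
`2φ` on `(0, ∞)`, so `Y` has density `u ↦ 2 ∫_{y > 0} φ(y) φ_{δy,a²}(u) dy`. Because
`a² + δ² = 1`, the two Gaussian factors can be traded: `φ(y) φ_{δy,a²}(u) = φ(u) φ_{δu,a²}(y)`.
Integrating the right-hand side over `y > 0` gives `φ(u) P(N(δu, a²) > 0) = φ(u) Φ(δu / a)`.
-/

open Set
open scoped ENNReal NNReal

theorem lintegral_comp_abs_of_isNegInvariant {μ : Measure ℝ} [μ.IsNegInvariant]
    [NullSingletonClass μ] {g : ℝ → ℝ≥0∞} (hg : Measurable g) :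
    ∫⁻ y, g |y| ∂μ = 2 * ∫⁻ y in Ioi 0, g y ∂μ := by
  set f := (Ioi (0 : ℝ)).indicator g
  have hf : Measurable f := hg.indicator measurableSet_Ioi
  have h_split : (fun y => g |y|) =ᵐ[μ] fun y => f y + f (-y) := by
    filter_upwards [compl_mem_ae_iff.mpr (measure_singleton (μ := μ) 0)] with y hy
    rcases lt_or_gt_of_ne (mem_compl_singleton_iff.mp hy) with hy | hy
    · simp [f, hy, hy.not_gt, abs_of_neg hy]
    · simp [f, hy, hy.not_gt, abs_of_pos hy]
  rw [lintegral_congr_ae h_split, lintegral_add_left hf,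
    (Measure.measurePreserving_neg μ).lintegral_comp hf, ← two_mul,
    lintegral_indicator measurableSet_Ioi]

instance isNegInvariant_gaussianReal_zero (v : ℝ≥0) : (gaussianReal 0 v).IsNegInvariant :=
  ⟨by simpa [Measure.neg_def] using gaussianReal_map_neg (μ := 0) (v := v)⟩

instance nullSingletonClass_gaussianReal_zero_one : NullSingletonClass (gaussianReal 0 1) :=
  nullSingletonClass_gaussianReal one_ne_zero

theorem gaussianReal_zero_one_map_affine {a : ℝ} {v : ℝ≥0} (hv : (v : ℝ) = a ^ 2) (c : ℝ) :
    (gaussianReal 0 1).map (fun x => a * x + c) = gaussianReal c v := by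
  calc (gaussianReal 0 1).map (fun x => a * x + c)
      = ((gaussianReal 0 1).map (a * ·)).map (· + c) :=
        (Measure.map_map (measurable_add_const c) (measurable_const_mul a)).symm
    _ = gaussianReal c v := by
        rw [gaussianReal_map_const_mul, gaussianReal_map_add_const]
        congr 1
        · simp
        · ext; simp [hv]

theorem lintegral_gaussianReal_zero_one_comp_affine {a : ℝ} {v : ℝ≥0} (hv0 : v ≠ 0)
    (hv : (v : ℝ) = a ^ 2) (c : ℝ) {h : ℝ → ℝ≥0∞} (hh : Measurable h) :
    ∫⁻ x, h (a * x + c) ∂gaussianReal 0 1 = ∫⁻ u, gaussianPDF c v u * h u := by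
  rw [← lintegral_map hh (by fun_prop), gaussianReal_zero_one_map_affine hv,
    gaussianReal_of_var_ne_zero _ hv0,
    lintegral_withDensity_eq_lintegral_mul _ (measurable_gaussianPDF _ _) hh]
  rfl

theorem stdNormalPDF_eq_gaussianPDFReal : stdNormalPDF = gaussianPDFReal 0 1 := by
  ext x; simp [stdNormalPDF, gaussianPDFReal]

theorem ofReal_stdNormalCDF (x : ℝ) :
    ENNReal.ofReal (stdNormalCDF x) = gaussianReal 0 1 (Iic x) := by
  rw [gaussianReal_apply_eq_integral _ one_ne_zero, stdNormalCDF, stdNormalPDF_eq_gaussianPDFReal]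

theorem stdNormalCDF_eq_cdf : stdNormalCDF = cdf (gaussianReal 0 1) := by
  ext x
  have h_nonneg : 0 ≤ stdNormalCDF x := integral_nonneg fun t => by
    rw [stdNormalPDF_eq_gaussianPDFReal]; exact gaussianPDFReal_nonneg 0 1 t
  rw [← ENNReal.ofReal_eq_ofReal_iff h_nonneg (cdf_nonneg _ _), ofReal_stdNormalCDF, ofReal_cdf]

theorem gaussianReal_Ioi_zero {a : ℝ} {v : ℝ≥0} (ha : 0 < a) (hv : (v : ℝ) = a ^ 2) (c : ℝ) :
    gaussianReal c v (Ioi 0) = ENNReal.ofReal (stdNormalCDF (c / a)) := by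
  have h_preimage : (fun x => a * x + c) ⁻¹' Ioi 0 = -Iio (c / a) := by
    ext x
    simp only [mem_preimage, mem_Ioi, mem_neg, mem_Iio, lt_div_iff₀ ha]
    constructor <;> intro <;> linarith
  rw [← gaussianReal_zero_one_map_affine hv, Measure.map_apply (by fun_prop) measurableSet_Ioi,
    h_preimage, Measure.measure_neg, measure_congr Iio_ae_eq_Iic, ofReal_stdNormalCDF]

-- Both exponents equal `-(u² - 2δuy + y²) / (2v)` when `v + δ² = 1`.
theorem gaussianPDFReal_mul_gaussianPDFReal_comm {δ : ℝ} {v : ℝ≥0} (hv0 : v ≠ 0)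
    (hvδ : (v : ℝ) + δ ^ 2 = 1) (y u : ℝ) :
    gaussianPDFReal 0 1 y * gaussianPDFReal (δ * y) v u =
      gaussianPDFReal 0 1 u * gaussianPDFReal (δ * u) v y := by
  have hv0' : (v : ℝ) ≠ 0 := NNReal.coe_ne_zero.mpr hv0
  simp only [gaussianPDFReal, NNReal.coe_one]
  rw [mul_mul_mul_comm, mul_mul_mul_comm _ (rexp _), ← exp_add, ← exp_add]
  congr 2
  field_simp
  linear_combination (u ^ 2 - y ^ 2) * hvδ

theorem gaussianPDF_mul_gaussianPDF_comm {δ : ℝ} {v : ℝ≥0} (hv0 : v ≠ 0)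
    (hvδ : (v : ℝ) + δ ^ 2 = 1) (y u : ℝ) :
    gaussianPDF 0 1 y * gaussianPDF (δ * y) v u = gaussianPDF 0 1 u * gaussianPDF (δ * u) v y := by
  simp only [gaussianPDF, ← ENNReal.ofReal_mul (gaussianPDFReal_nonneg _ _ _),
    gaussianPDFReal_mul_gaussianPDFReal_comm hv0 hvδ]

theorem measurable_gaussianPDF_const_mul_fst (δ : ℝ) (v : ℝ≥0) :
    Measurable fun p : ℝ × ℝ => gaussianPDF (δ * p.1) v p.2 :=
  measurable_uncurry_gaussianPDF.comp (f := fun p : ℝ × ℝ => (δ * p.1, v, p.2)) (by fun_prop)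

theorem measurable_lintegral_gaussianPDF_const_mul (δ : ℝ) (v : ℝ≥0) {h : ℝ → ℝ≥0∞}
    (hh : Measurable h) : Measurable fun t => ∫⁻ u, gaussianPDF (δ * t) v u * h u :=
  ((measurable_gaussianPDF_const_mul_fst δ v).mul
    (hh.comp measurable_snd)).lintegral_prod_right' (ν := volume)

theorem setLIntegral_Ioi_lintegral_gaussianPDF_comm {δ : ℝ} {v : ℝ≥0} (hv0 : v ≠ 0)
    (hvδ : (v : ℝ) + δ ^ 2 = 1) {h : ℝ → ℝ≥0∞} (hh : Measurable h) :
    ∫⁻ y in Ioi 0, (∫⁻ u, gaussianPDF (δ * y) v u * h u) ∂gaussianReal 0 1 =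
      ∫⁻ u, gaussianPDF 0 1 u * h u * gaussianReal (δ * u) v (Ioi 0) := by
  calc ∫⁻ y in Ioi 0, (∫⁻ u, gaussianPDF (δ * y) v u * h u) ∂gaussianReal 0 1
      = ∫⁻ y in Ioi 0, ∫⁻ u, gaussianPDF 0 1 u * h u * gaussianPDF (δ * u) v y := by
        rw [gaussianReal_of_var_ne_zero _ one_ne_zero,
          setLIntegral_withDensity_eq_setLIntegral_mul _ (measurable_gaussianPDF _ _)
            (measurable_lintegral_gaussianPDF_const_mul δ v hh) measurableSet_Ioi]
        refine lintegral_congr fun y => ?_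
        rw [Pi.mul_apply, ← lintegral_const_mul' _ _ gaussianPDF_ne_top]
        refine lintegral_congr fun u => ?_
        rw [← mul_assoc, gaussianPDF_mul_gaussianPDF_comm hv0 hvδ, mul_right_comm]
    _ = ∫⁻ u, gaussianPDF 0 1 u * h u * gaussianReal (δ * u) v (Ioi 0) := by
        rw [lintegral_lintegral_swap ((((measurable_gaussianPDF 0 1).comp measurable_snd).mul
          (hh.comp measurable_snd)).mul
          ((measurable_gaussianPDF_const_mul_fst δ v).comp measurable_swap)).aemeasurable]
        refine lintegral_congr fun u => ?_
        rw [lintegral_const_mul _ (measurable_gaussianPDF _ _), gaussianReal_apply _ hv0]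

theorem lintegral_comp_affine_abs_gaussianReal_prod {a δ : ℝ} (ha : 0 < a)
    (had : a ^ 2 + δ ^ 2 = 1) {h : ℝ → ℝ≥0∞} (hh : Measurable h) :
    ∫⁻ p, h (a * p.1 + δ * |p.2|) ∂(gaussianReal 0 1).prod (gaussianReal 0 1) =
      ∫⁻ u, ENNReal.ofReal (2 * stdNormalPDF u * stdNormalCDF (δ / a * u)) * h u := by
  obtain ⟨v, hv⟩ : ∃ v : ℝ≥0, (v : ℝ) = a ^ 2 := ⟨⟨a ^ 2, sq_nonneg a⟩, rfl⟩
  have hv0 : v ≠ 0 := by rw [← NNReal.coe_ne_zero, hv]; positivity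
  calc ∫⁻ p, h (a * p.1 + δ * |p.2|) ∂(gaussianReal 0 1).prod (gaussianReal 0 1)
      = ∫⁻ y, ∫⁻ x, h (a * x + δ * |y|) ∂gaussianReal 0 1 ∂gaussianReal 0 1 :=
        lintegral_prod_symm _ (hh.comp (by fun_prop)).aemeasurable
    _ = 2 * ∫⁻ y in Ioi 0, (∫⁻ u, gaussianPDF (δ * y) v u * h u) ∂gaussianReal 0 1 := by
        simp_rw [lintegral_gaussianReal_zero_one_comp_affine hv0 hv _ hh]
        exact lintegral_comp_abs_of_isNegInvariant (μ := gaussianReal 0 1)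
          (measurable_lintegral_gaussianPDF_const_mul δ v hh)
    _ = 2 * ∫⁻ u, gaussianPDF 0 1 u * h u * gaussianReal (δ * u) v (Ioi 0) := by
        rw [setLIntegral_Ioi_lintegral_gaussianPDF_comm hv0 (by rw [hv, had]) hh]
    _ = ∫⁻ u, ENNReal.ofReal (2 * stdNormalPDF u * stdNormalCDF (δ / a * u)) * h u := by
        rw [← lintegral_const_mul' _ _ ENNReal.ofNat_ne_top]
        refine lintegral_congr fun u => ?_
        rw [gaussianReal_Ioi_zero ha hv, gaussianPDF, stdNormalPDF_eq_gaussianPDFReal,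
          ENNReal.ofReal_mul (by have := gaussianPDFReal_nonneg 0 1 u; positivity),
          ENNReal.ofReal_mul zero_le_two, mul_div_right_comm, ENNReal.ofReal_ofNat]
        ring

/-- If `V₀, V₁` are independent standard normals and `δ ∈ (-1,1)`, then
`Y = √(1-δ²) V₀ + δ |V₁|` has density `y ↦ 2 φ(y) Φ(αy)` with
`α = δ/√(1-δ²)`. -/
theorem convolution_representation_skew_normal (δ : ℝ) (hδ : δ ∈ Set.Ioo (-1 : ℝ) 1) :
    Measure.map (fun p : ℝ × ℝ => Real.sqrt (1 - δ ^ 2) * p.1 + δ * |p.2|)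
      ((gaussianReal 0 1).prod (gaussianReal 0 1)) =
    (volume : Measure ℝ).withDensity
      (fun y => ENNReal.ofReal
        (2 * stdNormalPDF y * stdNormalCDF (δ / Real.sqrt (1 - δ ^ 2) * y))) := by
  have hδ_sq : 0 < 1 - δ ^ 2 := by nlinarith [hδ.1, hδ.2]
  have h_density : Measurable fun y =>
      ENNReal.ofReal (2 * stdNormalPDF y * stdNormalCDF (δ / √(1 - δ ^ 2) * y)) := by
    have := (cdf (gaussianReal 0 1)).mono.measurable
    rw [stdNormalCDF_eq_cdf, stdNormalPDF_eq_gaussianPDFReal]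
    fun_prop
  refine Measure.ext_of_lintegral _ fun h hh => ?_
  rw [lintegral_map hh (by fun_prop), lintegral_withDensity_eq_lintegral_mul _ h_density hh]
  exact lintegral_comp_affine_abs_gaussianReal_prod (sqrt_pos.2 hδ_sq)
    (by rw [sq_sqrt hδ_sq.le]; ring) hh
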